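/- arXiv:2410.12530 — 2 statements merged into one kernel-verified Lean document; each statement's English description precedes it below -/
import Mathlib

section
/- Let ξ ≥ 0 and let a₁, …, a_K be K vectors in ℝ^m with nonnegative entries such that for every coordinate i one has ∑_{k=1}^K a_k(i) = 1, and such that the inner product ⟨a_{k₁}, a_{k₂}⟩ ≤ ξ for all k₁ ≠ k₂. If ξ < 1/(K−1)², then for every coordinate i, max{a₁(i), …, a_K(i)} ≥ 1 − (K−1)·√ξ. -/
/-- **Lemma 3 of the paper.** Let `ξ ≥ 0` and let `a 1, …, a K` be `K` vectors in `ℝ^m`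
with nonnegative entries such that every coordinate sums to `1` across the `K` vectors,
and whose pairwise Euclidean inner products are at most `ξ`. If `ξ < 1/(K-1)²`, then for
every coordinate `i`, `max {a 1 i, …, a K i} ≥ 1 - (K-1)·√ξ`. -/
theorem disentangle_max_coordinate_bound
    (K m : ℕ) (hK : 0 < K) (ξ : ℝ) (hξ : 0 ≤ ξ)
    (a : Fin K → Fin m → ℝ)
    (hnonneg : ∀ k i, 0 ≤ a k i)
    (hsum : ∀ i, ∑ k, a k i = 1)
    (hinner : ∀ k₁ k₂, k₁ ≠ k₂ → ∑ i, a k₁ i * a k₂ i ≤ ξ)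
    (hξlt : ξ < 1 / ((K : ℝ) - 1) ^ 2) :
    ∀ i, 1 - ((K : ℝ) - 1) * Real.sqrt ξ ≤
      Finset.univ.sup' ⟨⟨0, hK⟩, Finset.mem_univ _⟩ (fun k => a k i) := by
  intro i
  set t := Real.sqrt ξ with ht
  have htnn : 0 ≤ t := Real.sqrt_nonneg _
  obtain ⟨k0, -, hk0⟩ := Finset.exists_mem_eq_sup'
    (⟨⟨0, hK⟩, Finset.mem_univ _⟩ : Finset.univ.Nonempty) (fun k => a k i)
  have hMk : ∀ k : Fin K, a k i ≤ a k0 i := fun k =>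
    hk0 ▸ Finset.le_sup' (fun k => a k i) (Finset.mem_univ k)
  have hsmall : ∀ k : Fin K, k ≠ k0 → a k i ≤ t := by
    intro k hk
    by_contra h
    push_neg at h
    have h1 : ξ < a k i * a k0 i := by
      have hξeq : t * t = ξ := Real.mul_self_sqrt hξ
      have := hMk k
      nlinarith
    have h2 : a k i * a k0 i ≤ ∑ j, a k j * a k0 j :=
      Finset.single_le_sum (fun j _ => mul_nonneg (hnonneg k j) (hnonneg k0 j))
        (Finset.mem_univ i)
    have := hinner k k0 hk
    linarith
  have hcard : (Finset.univ.erase k0).card = K - 1 := by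
    rw [Finset.card_erase_of_mem (Finset.mem_univ k0), Finset.card_univ, Fintype.card_fin]
  have h3 : ∑ k ∈ Finset.univ.erase k0, a k i ≤ ((K : ℝ) - 1) * t := by
    calc ∑ k ∈ Finset.univ.erase k0, a k i ≤ (Finset.univ.erase k0).card • t :=
          Finset.sum_le_card_nsmul _ _ _ (fun k hk => hsmall k (Finset.ne_of_mem_erase hk))
      _ = ((K : ℝ) - 1) * t := by
          rw [hcard, nsmul_eq_mul]
          congr 1
          have : (1 : ℕ) ≤ K := hK
          push_cast [Nat.cast_sub this]
          ring
  have h4 : a k0 i + ∑ k ∈ Finset.univ.erase k0, a k i = 1 := by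
    have h5 := Finset.add_sum_erase Finset.univ (fun k => a k i) (Finset.mem_univ k0)
    rw [hsum i] at h5
    exact h5
  rw [hk0]
  linarith
end

section
/- Fix integers K ≥ 1, m ≥ 1 and n > 0 with m dividing n, and let ξ ≥ 0 with ξ < 1/(K−1)². Suppose nonnegative integers n_{i,k} (for 1 ≤ i ≤ m base distributions and 1 ≤ k ≤ K clients) satisfy ∑_{k=1}^K n_{i,k} = n/m for every i, and that the proportion vectors a_k ∈ ℝ^m defined by a_k(i) = n_{i,k}/(n/m) satisfy ⟨a_{k₁}, a_{k₂}⟩ ≤ ξ for all k₁ ≠ k₂. Then for every base distribution i there exists a client k with n_{i,k} ≥ (1 − (K−1)·√ξ)·(n/m). -/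
/-- Key counting claim in the proof of Theorem 2 (near-disentangled case): if each of the
`m` base distributions has exactly `n/m` samples spread across `K` clients (`N i k` samples
of base distribution `i` held by client `k`), and the clients' proportion vectors
`a k = (N i k / (n/m))_i` are pairwise `ξ`-entangled with `ξ < 1/(K-1)²`, then every base
distribution `i` is dominated by some client `k` holding at least `(1-(K-1)√ξ)·(n/m)`
of its samples. -/
theorem near_disentangled_dominating_client
    (K m n : ℕ) (hK : 1 ≤ K) (hm : 1 ≤ m) (hn : 0 < n) (hdvd : m ∣ n)
    (ξ : ℝ) (hξ : 0 ≤ ξ) (hξlt : ξ < 1 / ((K : ℝ) - 1) ^ 2)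
    (N : Fin m → Fin K → ℕ)
    (hsum : ∀ i, ∑ k, N i k = n / m)
    (hinner : ∀ k₁ k₂, k₁ ≠ k₂ →
      ∑ i, ((N i k₁ : ℝ) / ((n : ℝ) / (m : ℝ))) * ((N i k₂ : ℝ) / ((n : ℝ) / (m : ℝ))) ≤ ξ) :
    ∀ i, ∃ k, (1 - ((K : ℝ) - 1) * Real.sqrt ξ) * ((n : ℝ) / (m : ℝ)) ≤ (N i k : ℝ) := by
  intro i
  have hm0 : (0:ℝ) < (m:ℝ) := by exact_mod_cast hm
  have hS : (0:ℝ) < (n:ℝ)/(m:ℝ) := div_pos (by exact_mod_cast hn) hm0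
  set S : ℝ := (n:ℝ)/(m:ℝ) with hSdef
  obtain ⟨k, -, hk⟩ := Finset.exists_max_image Finset.univ (fun k => N i k)
    (Finset.univ_nonempty_iff.mpr ⟨⟨0, hK⟩⟩)
  refine ⟨k, ?_⟩
  have key : ∀ j, j ≠ k → (N i j : ℝ) ≤ Real.sqrt ξ * S := by
    intro j hj
    have h1 : ((N i j : ℝ)/S) * ((N i k : ℝ)/S) ≤ ξ := by
      refine le_trans ?_ (hinner j k hj)
      exact Finset.single_le_sum
        (f := fun i' => ((N i' j : ℝ)/S) * ((N i' k : ℝ)/S))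
        (fun i' _ => mul_nonneg (div_nonneg (Nat.cast_nonneg _) hS.le)
          (div_nonneg (Nat.cast_nonneg _) hS.le)) (Finset.mem_univ i)
    have hle : (N i j : ℝ) ≤ (N i k : ℝ) := by exact_mod_cast hk j (Finset.mem_univ j)
    have hj0 : (0:ℝ) ≤ (N i j : ℝ)/S := div_nonneg (Nat.cast_nonneg _) hS.le
    have h2 : ((N i j : ℝ)/S)^2 ≤ ξ := by
      have : ((N i j : ℝ)/S) * ((N i j : ℝ)/S) ≤ ((N i j : ℝ)/S) * ((N i k : ℝ)/S) := by
        apply mul_le_mul_of_nonneg_left _ hj0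
        gcongr
      nlinarith
    have h3 : (N i j : ℝ)/S ≤ Real.sqrt ξ := by
      have := Real.sqrt_le_sqrt h2
      rwa [Real.sqrt_sq hj0] at this
    calc (N i j : ℝ) = ((N i j:ℝ)/S)*S := by field_simp
      _ ≤ Real.sqrt ξ * S := mul_le_mul_of_nonneg_right h3 hS.le
  have hsumR : ∑ j, (N i j : ℝ) = S := by
    rw [← Nat.cast_sum, hsum i, Nat.cast_div hdvd (by exact_mod_cast hm0.ne')]
  have herase : ∑ j ∈ Finset.univ.erase k, (N i j : ℝ) = S - (N i k : ℝ) := by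
    rw [← hsumR, Finset.sum_erase_eq_sub (Finset.mem_univ k)]
  have hcard : ((Finset.univ.erase k).card : ℝ) = (K:ℝ) - 1 := by
    rw [Finset.card_erase_of_mem (Finset.mem_univ k)]
    simp [Nat.cast_sub hK]
  have hbound : ∑ j ∈ Finset.univ.erase k, (N i j : ℝ)
      ≤ ((K:ℝ) - 1) * (Real.sqrt ξ * S) := by
    calc ∑ j ∈ Finset.univ.erase k, (N i j : ℝ)
        ≤ ∑ j ∈ Finset.univ.erase k, Real.sqrt ξ * S :=
          Finset.sum_le_sum (fun j hjmem => key j (Finset.ne_of_mem_erase hjmem))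
      _ = ((Finset.univ.erase k).card : ℝ) * (Real.sqrt ξ * S) := by
          rw [Finset.sum_const, nsmul_eq_mul]
      _ = ((K:ℝ) - 1) * (Real.sqrt ξ * S) := by rw [hcard]
  rw [herase] at hbound
  nlinarith
end
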